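/- In a characteristic φ-Šerstnev PN space (V, ν, τ, τ*) with lim_{x→∞} φ̂(x) = ∞, a subset A is topologically bounded if and only if for every n ∈ ℕ there exists k ∈ ℕ such that A ⊆ k·N_0(1/n), where N_0(λ) is the strong λ-neighborhood of the origin. -/

import Mathlib

open Filter Pointwise

/-- A φ-Šerstnev probabilistic normed space on a real vector space `V`.
`nu p` is the distribution function of `p` (as a function ℝ → [0,1], vanishing on
(-∞,0]), `tau` is the triangle function, `phi` the generating function in M̃ and
`phihat` its left-continuous quasi-inverse. -/
structure GSerstnev (V : Type*) [AddCommGroup V] [Module ℝ V] where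
  nu : V → ℝ → ℝ
  tau : (ℝ → ℝ) → (ℝ → ℝ) → (ℝ → ℝ)
  phi : ℝ → ℝ
  phihat : ℝ → ℝ
  mono : ∀ p, Monotone (nu p)
  mem01 : ∀ p x, nu p x ∈ Set.Icc (0:ℝ) 1
  zero_of_nonpos : ∀ p x, x ≤ 0 → nu p x = 0
  eps0 : ∀ x > (0:ℝ), nu 0 x = 1
  eq_zero : ∀ p : V, (∀ x > (0:ℝ), nu p x = 1) → p = 0
  neg : ∀ p : V, nu (-p) = nu p
  tri : ∀ p q x, tau (nu p) (nu q) x ≤ nu (p + q) x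
  phi_mono : Monotone phi
  phi_zero : phi 0 = 0
  phi_pos : ∀ x > (0:ℝ), 0 < phi x
  phihat_mono : Monotone phihat
  quasi1 : ∀ x ≥ (0:ℝ), phihat (phi x) ≤ x
  quasi2 : ∀ y ≥ (0:ℝ), phi (phihat y) ≤ y
  serstnev : ∀ (l : ℝ), l ≠ 0 → ∀ (p : V) (x : ℝ), 0 ≤ x →
    nu (l • p) x = nu p (phihat (phi x / |l|))

/-- Strong convergence of a sequence in a φ-Šerstnev PN space. -/
def SConv {V : Type*} [AddCommGroup V] [Module ℝ V] (G : GSerstnev V)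
    (s : ℕ → V) (p : V) : Prop :=
  ∀ l : ℝ, 0 < l → ∃ N : ℕ, ∀ m ≥ N, G.nu (s m - p) l > 1 - l

open Topology

/- If no multiple `k • N₀(λ)` contains `A`, picking `s k ∈ A` outside `k • N₀(λ)` and
`α k = 1/k` gives a sequence `α k • s k` that never enters `N₀(λ)`. Conversely, the Šerstnev
condition `ν_{cq}(λ) = ν_q(φ̂(φ(λ)/|c|))` together with `φ̂ → ∞` shows that a small scalar `c`
can only increase `ν_q(λ)`, so `α m • (k • q) = (α m * k) • q` lies in `N₀(λ)` as soon as
`α m * k` is small. -/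

namespace GSerstnev

variable {V : Type*} [AddCommGroup V] [Module ℝ V] (G : GSerstnev V)

/-- The strong neighbourhood `N₀(λ)` of the origin. -/
def strongNhdZero (l : ℝ) : Set V := {q | G.nu q l > 1 - l}

variable {G}

theorem strongNhdZero_mono {l l' : ℝ} (h : l ≤ l') : G.strongNhdZero l ⊆ G.strongNhdZero l' :=
  fun q hq => calc 1 - l' ≤ 1 - l := by linarith
    _ < G.nu q l := hq
    _ ≤ G.nu q l' := G.mono q h

theorem sconv_zero_iff {s : ℕ → V} :
    SConv G s 0 ↔ ∀ l > 0, ∀ᶠ m in atTop, s m ∈ G.strongNhdZero l := by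
  simp only [SConv, sub_zero, eventually_atTop]
  rfl

theorem eventually_nu_le_nu_smul (hphihat : Tendsto G.phihat atTop atTop) {l : ℝ} (hl : 0 < l) :
    ∀ᶠ c in 𝓝 (0 : ℝ), ∀ q, G.nu q l ≤ G.nu (c • q) l := by
  have hlarge : Tendsto (fun c : ℝ => G.phihat (G.phi l * |c|⁻¹)) (𝓝[≠] 0) atTop :=
    hphihat.comp <| (tendsto_inv_nhdsGT_zero.comp tendsto_abs_nhdsNE_zero).const_mul_atTop
      (G.phi_pos l hl)
  filter_upwards [eventually_nhdsWithin_iff.mp (hlarge.eventually_ge_atTop l)] with c hc q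
  rcases eq_or_ne c 0 with rfl | hc0
  · rw [zero_smul, G.eps0 l hl]
    exact (G.mem01 q l).2
  · rw [G.serstnev c hc0 q l hl.le, div_eq_mul_inv]
    exact G.mono q (hc hc0)

variable (G)

theorem exists_nat_subset_smul_strongNhdZero {A : Set V}
    (hA : ∀ (α : ℕ → ℝ) (s : ℕ → V), Tendsto α atTop (𝓝 0) → (∀ n, s n ∈ A) →
      SConv G (fun m => α m • s m) 0)
    {l : ℝ} (hl : 0 < l) : ∃ k : ℕ, A ⊆ (k : ℝ) • G.strongNhdZero l := by
  by_contra! hnot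
  choose s hsA hsN using fun k => Set.not_subset.mp (hnot k)
  have hconv := (sconv_zero_iff.mp <| hA _ (fun m => s (m + 1))
    tendsto_one_div_add_atTop_nhds_zero_nat fun m => hsA (m + 1)) l hl
  obtain ⟨m, hm⟩ := hconv.exists
  refine hsN (m + 1) ⟨_, hm, ?_⟩
  have hm0 : ((m : ℝ) + 1) ≠ 0 := by positivity
  simp only [smul_smul, Nat.cast_succ, mul_one_div_cancel hm0, one_smul]

theorem sconv_smul_zero_of_subset_smul_strongNhdZero (hphihat : Tendsto G.phihat atTop atTop)
    {A : Set V} (hA : ∀ n : ℕ, 0 < n → ∃ k : ℕ, A ⊆ (k : ℝ) • G.strongNhdZero (1 / n))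
    {α : ℕ → ℝ} {s : ℕ → V} (hα : Tendsto α atTop (𝓝 0)) (hs : ∀ n, s n ∈ A) :
    SConv G (fun m => α m • s m) 0 := by
  refine sconv_zero_iff.mpr fun l hl => ?_
  obtain ⟨n, hn⟩ := exists_nat_one_div_lt hl
  obtain ⟨k, hk⟩ := hA (n + 1) n.succ_pos
  rw [Nat.cast_succ] at hk
  have hαk : Tendsto (fun m => α m * k) atTop (𝓝 0) := by simpa using hα.mul_const (k : ℝ)
  have hsmall := eventually_nu_le_nu_smul hphihat (l := 1 / ((n : ℝ) + 1)) (by positivity)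
  filter_upwards [hαk.eventually hsmall] with m hm
  obtain ⟨q, hq, hqs⟩ := hk (hs m)
  rw [← hqs, smul_smul]
  exact strongNhdZero_mono hn.le (lt_of_lt_of_le hq (hm q))

end GSerstnev

theorem stmt15_general {V : Type*} [AddCommGroup V] [Module ℝ V] (G : GSerstnev V)
    (hphihat : Tendsto G.phihat atTop atTop)
    (A : Set V) :
    (∀ (α : ℕ → ℝ) (s : ℕ → V), Tendsto α atTop (nhds 0) → (∀ n, s n ∈ A) →
        SConv G (fun m => α m • s m) 0)
      ↔ ∀ n : ℕ, 0 < n → ∃ k : ℕ,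
          A ⊆ (k : ℝ) • {q : V | G.nu q (1 / (n : ℝ)) > 1 - 1 / (n : ℝ)} :=
  ⟨fun hA n hn => G.exists_nat_subset_smul_strongNhdZero hA (by positivity),
    fun hA _ _ hα hs => G.sconv_smul_zero_of_subset_smul_strongNhdZero hphihat hA hα hs⟩

/-- in a characteristic φ-Šerstnev PN space with φ̂(x) → ∞, a set A
is topologically bounded iff for every n there is k ∈ ℕ with A ⊆ k·N₀(1/n), where
N₀(λ) = {q : ν_q(λ) > 1 - λ}. -/
theorem stmt15 {V : Type*} [AddCommGroup V] [Module ℝ V] (G : GSerstnev V)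
    (hchar : ∀ p : V, Tendsto (G.nu p) atTop (nhds 1))
    (hphihat : Tendsto G.phihat atTop atTop)
    (A : Set V) :
    (∀ (α : ℕ → ℝ) (s : ℕ → V), Tendsto α atTop (nhds 0) → (∀ n, s n ∈ A) →
        SConv G (fun m => α m • s m) 0)
      ↔ ∀ n : ℕ, 0 < n → ∃ k : ℕ,
          A ⊆ (k : ℝ) • {q : V | G.nu q (1 / (n : ℝ)) > 1 - 1 / (n : ℝ)} :=
  stmt15_general G hphihat A
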